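/- arXiv:2507.11337 — 2 statements merged into one kernel-verified Lean document; each statement's English description precedes it below -/
import Mathlib

section
/- The canonical homomorphism α : K₁ᶠ(S) → K₁(S), [f] ↦ [f], from the K₁-group defined using finitely generated free modules to the K₁-group defined using finitely generated projective modules, is an isomorphism of abelian groups. -/
/-!
STATEMENT 2: The canonical homomorphism `α : K₁ᶠ(S) → K₁(S)`, `[f] ↦ [f]`, from the
`K₁`-group defined via finitely generated free modules to the one defined via finitely
generated projective modules, is an isomorphism of abelian groups.
-/

universe u

/-- A bundled finitely generated projective module over `S`. -/
structure FGProj (S : Type u) [Ring S] where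
  carrier : Type u
  [addCommGroup : AddCommGroup carrier]
  [module : Module S carrier]
  fg : Module.Finite S carrier
  proj : Module.Projective S carrier

attribute [instance] FGProj.addCommGroup FGProj.module

/-- A bundled finitely generated free module over `S`. -/
structure FGFree (S : Type u) [Ring S] where
  carrier : Type u
  [addCommGroup : AddCommGroup carrier]
  [module : Module S carrier]
  fg : Module.Finite S carrier
  free : Module.Free S carrier

attribute [instance] FGFree.addCommGroup FGFree.module

/-- A finitely generated free module is in particular finitely generated projective. -/
def FGFree.toFGProj {S : Type u} [Ring S] (M : FGFree S) : FGProj S :=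
  { carrier := M.carrier, fg := M.fg,
    proj := @Module.Projective.of_free S _ M.carrier _ _ M.free }

section K1

variable (S : Type u) [Ring S]

/-- A generator of `K₁(S)`: an automorphism of a finitely generated projective module. -/
structure K1Gen (S : Type u) [Ring S] where
  base : FGProj S
  auto : base.carrier ≃ₗ[S] base.carrier

/-- A generator of `K₁ᶠ(S)`: an automorphism of a finitely generated free module. -/
structure K1FGen (S : Type u) [Ring S] where
  base : FGFree S
  auto : base.carrier ≃ₗ[S] base.carrier

/-- The relations defining `K₁(S)`: additivity along short exact sequences, and the
composition formula. -/
def K1Rels : Set (FreeAbelianGroup (K1Gen S)) :=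
  {x | (∃ (M₀ M₁ M₂ : FGProj S) (f₀ : M₀.carrier ≃ₗ[S] M₀.carrier)
          (f₁ : M₁.carrier ≃ₗ[S] M₁.carrier) (f₂ : M₂.carrier ≃ₗ[S] M₂.carrier)
          (i : M₀.carrier →ₗ[S] M₁.carrier) (p : M₁.carrier →ₗ[S] M₂.carrier),
        Function.Injective i ∧ Function.Surjective p ∧
        LinearMap.range i = LinearMap.ker p ∧
        (∀ m, f₁ (i m) = i (f₀ m)) ∧ (∀ m, p (f₁ m) = f₂ (p m)) ∧
        x = FreeAbelianGroup.of ⟨M₁, f₁⟩ - FreeAbelianGroup.of ⟨M₀, f₀⟩ -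
              FreeAbelianGroup.of ⟨M₂, f₂⟩) ∨
      (∃ (M : FGProj S) (f g : M.carrier ≃ₗ[S] M.carrier),
        x = FreeAbelianGroup.of ⟨M, f.trans g⟩ - FreeAbelianGroup.of ⟨M, f⟩ -
              FreeAbelianGroup.of ⟨M, g⟩)}

/-- The relations defining `K₁ᶠ(S)`. -/
def K1FRels : Set (FreeAbelianGroup (K1FGen S)) :=
  {x | (∃ (M₀ M₁ M₂ : FGFree S) (f₀ : M₀.carrier ≃ₗ[S] M₀.carrier)
          (f₁ : M₁.carrier ≃ₗ[S] M₁.carrier) (f₂ : M₂.carrier ≃ₗ[S] M₂.carrier)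
          (i : M₀.carrier →ₗ[S] M₁.carrier) (p : M₁.carrier →ₗ[S] M₂.carrier),
        Function.Injective i ∧ Function.Surjective p ∧
        LinearMap.range i = LinearMap.ker p ∧
        (∀ m, f₁ (i m) = i (f₀ m)) ∧ (∀ m, p (f₁ m) = f₂ (p m)) ∧
        x = FreeAbelianGroup.of ⟨M₁, f₁⟩ - FreeAbelianGroup.of ⟨M₀, f₀⟩ -
              FreeAbelianGroup.of ⟨M₂, f₂⟩) ∨
      (∃ (M : FGFree S) (f g : M.carrier ≃ₗ[S] M.carrier),
        x = FreeAbelianGroup.of ⟨M, f.trans g⟩ - FreeAbelianGroup.of ⟨M, f⟩ -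
              FreeAbelianGroup.of ⟨M, g⟩)}

/-- `K₁(S)`. -/
def K1 : Type (u + 1) := FreeAbelianGroup (K1Gen S) ⧸ AddSubgroup.closure (K1Rels S)

instance : AddCommGroup (K1 S) :=
  inferInstanceAs (AddCommGroup (FreeAbelianGroup (K1Gen S) ⧸ AddSubgroup.closure (K1Rels S)))

/-- `K₁ᶠ(S)`. -/
def K1F : Type (u + 1) := FreeAbelianGroup (K1FGen S) ⧸ AddSubgroup.closure (K1FRels S)

instance : AddCommGroup (K1F S) :=
  inferInstanceAs (AddCommGroup (FreeAbelianGroup (K1FGen S) ⧸ AddSubgroup.closure (K1FRels S)))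

/-- The class `[f] ∈ K₁(S)`. -/
def K1.cls (g : K1Gen S) : K1 S := QuotientAddGroup.mk (FreeAbelianGroup.of g)

/-- The class `[f] ∈ K₁ᶠ(S)`. -/
def K1F.cls (g : K1FGen S) : K1F S := QuotientAddGroup.mk (FreeAbelianGroup.of g)

end K1

/-!
The inverse of `α` sends `[f]`, for `f` an automorphism of a finitely generated projective `P`,
to `[f ⊕ 1_Q] ∈ K₁ᶠ(S)`, where `Q` is any finitely generated projective module with `P ⊕ Q` free.
Independence of `Q` holds because `[f ⊕ 1_Q]` and `[f ⊕ 1_Q']` both equal `[f ⊕ 1_Q ⊕ 1_P ⊕ 1_Q']`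
up to a coordinate swap, and stabilization and conjugation invariance hold in `K₁ᶠ(S)`.
The composition formula is clear; additivity holds because a short exact sequence with projective
quotient splits, so `Q₀ ⊕ Q₂` complements the middle term whenever `Q₀`, `Q₂` complement the ends.
Both composites with `α` are the identity since `[f ⊕ 1] = [f]` in `K₁(S)` and in `K₁ᶠ(S)`.
-/

theorem Function.Exact.prodMap {M N P M' N' P' : Type*} [Zero P] [Zero P'] {f : M → N} {g : N → P}
    {f' : M' → N'} {g' : N' → P'} (h : Exact f g) (h' : Exact f' g') :
    Exact (Prod.map f f') (Prod.map g g') := by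
  rintro ⟨x, y⟩
  simp only [Prod.map_apply, Prod.mk_eq_zero, h x, h' y, Set.range_prodMap, Set.mem_prod]

theorem Module.Projective.exists_free_prod (R : Type u) [Ring R] (P : Type*) [AddCommGroup P]
    [Module R P] [Module.Finite R P] [Module.Projective R P] :
    ∃ (Q : Type u) (_ : AddCommGroup Q) (_ : Module R Q),
      Module.Finite R Q ∧ Module.Projective R Q ∧ Module.Free R (P × Q) := by
  obtain ⟨n, π, hπ⟩ := Module.Finite.exists_fin' R P
  obtain ⟨s, hs⟩ := Module.projective_lifting_property π LinearMap.id hπ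
  let e : (Fin n → R) ≃ₗ[R] LinearMap.ker π × P :=
    ((LinearMap.exact_iff.2 (Submodule.range_subtype _).symm).splitSurjectiveEquiv
      (Submodule.injective_subtype _) ⟨s, hs⟩).1
  refine ⟨LinearMap.ker π, inferInstance, inferInstance,
    Module.Finite.of_surjective (LinearMap.fst R _ P ∘ₗ e.toLinearMap)
      (Prod.fst_surjective.comp e.surjective),
    Module.Projective.of_split (e.symm.toLinearMap ∘ₗ LinearMap.inl R _ P)
      (LinearMap.fst R _ P ∘ₗ e.toLinearMap) (LinearMap.ext fun k => by simp),
    Module.Free.of_equiv (e.trans (LinearEquiv.prodComm R _ P))⟩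

theorem Module.Free.prod_prod_of_exact {R M₀ M₁ M₂ N₀ N₂ : Type*} [Ring R]
    [AddCommGroup M₀] [AddCommGroup M₁] [AddCommGroup M₂] [AddCommGroup N₀] [AddCommGroup N₂]
    [Module R M₀] [Module R M₁] [Module R M₂] [Module R N₀] [Module R N₂]
    [Module.Projective R M₂] [Module.Free R (M₀ × N₀)] [Module.Free R (M₂ × N₂)]
    {i : M₀ →ₗ[R] M₁} {p : M₁ →ₗ[R] M₂} (hi : Function.Injective i) (hp : Function.Surjective p)
    (hex : Function.Exact i p) : Module.Free R (M₁ × (N₀ × N₂)) := by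
  obtain ⟨s, hs⟩ := Module.projective_lifting_property p LinearMap.id hp
  let e : M₁ ≃ₗ[R] M₀ × M₂ := (hex.splitSurjectiveEquiv hi ⟨s, hs⟩).1
  exact Module.Free.of_equiv
    ((e.prodCongr (LinearEquiv.refl R _)).trans (LinearEquiv.prodProdProdComm R M₀ M₂ N₀ N₂)).symm

attribute [local instance] FGProj.fg FGProj.proj FGFree.fg FGFree.free

variable {S : Type u} [Ring S]

namespace FGProj

abbrev prod (P Q : FGProj S) : FGProj S :=
  { carrier := P.carrier × Q.carrier, fg := inferInstance, proj := inferInstance }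

abbrev prodFree (P Q : FGProj S) (h : Module.Free S (P.carrier × Q.carrier)) : FGFree S :=
  { carrier := P.carrier × Q.carrier, fg := inferInstance, free := h }

theorem exists_free_prod (P : FGProj S) :
    ∃ Q : FGProj S, Module.Free S (P.carrier × Q.carrier) := by
  obtain ⟨Q, _, _, hfg, hproj, hfree⟩ := Module.Projective.exists_free_prod S P.carrier
  exact ⟨⟨Q, hfg, hproj⟩, hfree⟩

end FGProj

namespace FGFree

abbrev prod (M N : FGFree S) : FGFree S :=
  { carrier := M.carrier × N.carrier, fg := inferInstance, free := inferInstance }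

def zero (S : Type u) [Ring S] : FGFree S :=
  { carrier := PUnit, fg := inferInstance, free := inferInstance }

end FGFree

namespace K1

theorem cls_eq_add_of_exact {M₀ M₁ M₂ : FGProj S} (f₀ : M₀.carrier ≃ₗ[S] M₀.carrier)
    (f₁ : M₁.carrier ≃ₗ[S] M₁.carrier) (f₂ : M₂.carrier ≃ₗ[S] M₂.carrier)
    {i : M₀.carrier →ₗ[S] M₁.carrier} {p : M₁.carrier →ₗ[S] M₂.carrier}
    (hi : Function.Injective i) (hp : Function.Surjective p) (hex : Function.Exact i p)
    (h₀ : ∀ m, f₁ (i m) = i (f₀ m)) (h₂ : ∀ m, p (f₁ m) = f₂ (p m)) :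
    K1.cls S ⟨M₁, f₁⟩ = K1.cls S ⟨M₀, f₀⟩ + K1.cls S ⟨M₂, f₂⟩ := by
  rw [← sub_eq_zero, ← sub_sub]
  exact (QuotientAddGroup.eq_zero_iff _).2 (AddSubgroup.subset_closure (Or.inl
    ⟨M₀, M₁, M₂, f₀, f₁, f₂, i, p, hi, hp, (LinearMap.exact_iff.1 hex).symm, h₀, h₂, rfl⟩))

theorem cls_trans (M : FGProj S) (f g : M.carrier ≃ₗ[S] M.carrier) :
    K1.cls S ⟨M, f.trans g⟩ = K1.cls S ⟨M, f⟩ + K1.cls S ⟨M, g⟩ := by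
  rw [← sub_eq_zero, ← sub_sub]
  exact (QuotientAddGroup.eq_zero_iff _).2 (AddSubgroup.subset_closure (Or.inr ⟨M, f, g, rfl⟩))

theorem cls_refl (M : FGProj S) : K1.cls S ⟨M, LinearEquiv.refl S M.carrier⟩ = 0 :=
  left_eq_add.1 (cls_trans M (.refl S _) (.refl S _))

theorem cls_prodCongr_refl (M N : FGProj S) (f : M.carrier ≃ₗ[S] M.carrier) :
    K1.cls S ⟨M.prod N, f.prodCongr (.refl S N.carrier)⟩ = K1.cls S ⟨M, f⟩ := by
  rw [cls_eq_add_of_exact (M₁ := M.prod N) f (f.prodCongr (.refl S N.carrier)) (.refl S N.carrier)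
    (i := LinearMap.inl S _ _) (p := LinearMap.snd S _ _) LinearMap.inl_injective
    LinearMap.snd_surjective Function.Exact.inl_snd (fun _ => rfl) (fun _ => rfl),
    cls_refl, add_zero]

theorem hom_ext {A : Type*} [AddCommGroup A] {φ ψ : K1 S →+ A}
    (h : ∀ g, φ (K1.cls S g) = ψ (K1.cls S g)) : φ = ψ :=
  QuotientAddGroup.addMonoidHom_ext _ (FreeAbelianGroup.lift_ext _ _ h)

end K1

namespace K1F

theorem cls_eq_add_of_exact {M₀ M₁ M₂ : FGFree S} (f₀ : M₀.carrier ≃ₗ[S] M₀.carrier)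
    (f₁ : M₁.carrier ≃ₗ[S] M₁.carrier) (f₂ : M₂.carrier ≃ₗ[S] M₂.carrier)
    {i : M₀.carrier →ₗ[S] M₁.carrier} {p : M₁.carrier →ₗ[S] M₂.carrier}
    (hi : Function.Injective i) (hp : Function.Surjective p) (hex : Function.Exact i p)
    (h₀ : ∀ m, f₁ (i m) = i (f₀ m)) (h₂ : ∀ m, p (f₁ m) = f₂ (p m)) :
    K1F.cls S ⟨M₁, f₁⟩ = K1F.cls S ⟨M₀, f₀⟩ + K1F.cls S ⟨M₂, f₂⟩ := by
  rw [← sub_eq_zero, ← sub_sub]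
  exact (QuotientAddGroup.eq_zero_iff _).2 (AddSubgroup.subset_closure (Or.inl
    ⟨M₀, M₁, M₂, f₀, f₁, f₂, i, p, hi, hp, (LinearMap.exact_iff.1 hex).symm, h₀, h₂, rfl⟩))

theorem cls_trans (M : FGFree S) (f g : M.carrier ≃ₗ[S] M.carrier) :
    K1F.cls S ⟨M, f.trans g⟩ = K1F.cls S ⟨M, f⟩ + K1F.cls S ⟨M, g⟩ := by
  rw [← sub_eq_zero, ← sub_sub]
  exact (QuotientAddGroup.eq_zero_iff _).2 (AddSubgroup.subset_closure (Or.inr ⟨M, f, g, rfl⟩))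

theorem cls_refl (M : FGFree S) : K1F.cls S ⟨M, LinearEquiv.refl S M.carrier⟩ = 0 :=
  left_eq_add.1 (cls_trans M (.refl S _) (.refl S _))

theorem cls_prodCongr_refl (M N : FGFree S) (f : M.carrier ≃ₗ[S] M.carrier) :
    K1F.cls S ⟨M.prod N, f.prodCongr (.refl S N.carrier)⟩ = K1F.cls S ⟨M, f⟩ := by
  rw [cls_eq_add_of_exact (M₁ := M.prod N) f (f.prodCongr (.refl S N.carrier)) (.refl S N.carrier)
    (i := LinearMap.inl S _ _) (p := LinearMap.snd S _ _) LinearMap.inl_injective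
    LinearMap.snd_surjective Function.Exact.inl_snd (fun _ => rfl) (fun _ => rfl),
    cls_refl, add_zero]

theorem cls_eq_of_linearEquiv {M N : FGFree S} (e : M.carrier ≃ₗ[S] N.carrier)
    (f : M.carrier ≃ₗ[S] M.carrier) (g : N.carrier ≃ₗ[S] N.carrier) (h : ∀ m, g (e m) = e (f m)) :
    K1F.cls S ⟨N, g⟩ = K1F.cls S ⟨M, f⟩ := by
  have : Subsingleton (FGFree.zero S).carrier := inferInstanceAs (Subsingleton PUnit)
  rw [cls_eq_add_of_exact (M₂ := FGFree.zero S) f g (.refl S _) (i := e.toLinearMap) (p := 0)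
    e.injective (fun _ => ⟨0, Subsingleton.elim _ _⟩)
    (fun y => iff_of_true rfl (e.surjective y))
    h (fun _ => Subsingleton.elim _ _), cls_refl, add_zero]

theorem hom_ext {A : Type*} [AddCommGroup A] {φ ψ : K1F S →+ A}
    (h : ∀ g, φ (K1F.cls S g) = ψ (K1F.cls S g)) : φ = ψ :=
  QuotientAddGroup.addMonoidHom_ext _ (FreeAbelianGroup.lift_ext _ _ h)

end K1F

namespace K1Gen

def clsStab (g : K1Gen S) (Q : FGProj S) (hQ : Module.Free S (g.base.carrier × Q.carrier)) :
    K1F S :=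
  K1F.cls S ⟨g.base.prodFree Q hQ, g.auto.prodCongr (.refl S Q.carrier)⟩

theorem clsStab_eq_clsStab (g : K1Gen S) {Q Q' : FGProj S}
    (hQ : Module.Free S (g.base.carrier × Q.carrier))
    (hQ' : Module.Free S (g.base.carrier × Q'.carrier)) : g.clsStab Q hQ = g.clsStab Q' hQ' := by
  obtain ⟨P, f⟩ := g
  let u :=
    (LinearEquiv.prodProdProdComm S _ _ _ _).trans
      (((LinearEquiv.refl S _).prodCongr (LinearEquiv.prodComm S _ _)).trans
        (LinearEquiv.prodProdProdComm S P.carrier P.carrier Q'.carrier Q.carrier))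
  calc clsStab ⟨P, f⟩ Q hQ
      = K1F.cls S ⟨(P.prodFree Q hQ).prod (P.prodFree Q' hQ'),
          (f.prodCongr (.refl S _)).prodCongr (.refl S _)⟩ := (K1F.cls_prodCongr_refl _ _ _).symm
    _ = K1F.cls S ⟨(P.prodFree Q' hQ').prod (P.prodFree Q hQ),
          (f.prodCongr (.refl S _)).prodCongr (.refl S _)⟩ :=
        Eq.symm <| K1F.cls_eq_of_linearEquiv u _ _ fun _ => rfl
    _ = clsStab ⟨P, f⟩ Q' hQ' := K1F.cls_prodCongr_refl _ _ _

noncomputable def toK1F (g : K1Gen S) : K1F S :=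
  g.clsStab _ g.base.exists_free_prod.choose_spec

theorem toK1F_eq_clsStab (g : K1Gen S) (Q : FGProj S)
    (hQ : Module.Free S (g.base.carrier × Q.carrier)) : g.toK1F = g.clsStab Q hQ :=
  clsStab_eq_clsStab g _ hQ

theorem toK1F_trans (M : FGProj S) (f g : M.carrier ≃ₗ[S] M.carrier) :
    toK1F ⟨M, f.trans g⟩ = toK1F ⟨M, f⟩ + toK1F ⟨M, g⟩ := by
  obtain ⟨Q, hQ⟩ := M.exists_free_prod
  rw [toK1F_eq_clsStab ⟨M, f.trans g⟩ Q hQ, toK1F_eq_clsStab ⟨M, f⟩ Q hQ,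
    toK1F_eq_clsStab ⟨M, g⟩ Q hQ]
  exact K1F.cls_trans (M.prodFree Q hQ) (f.prodCongr (.refl S _)) (g.prodCongr (.refl S _))

theorem toK1F_eq_add_of_exact {M₀ M₁ M₂ : FGProj S} (f₀ : M₀.carrier ≃ₗ[S] M₀.carrier)
    (f₁ : M₁.carrier ≃ₗ[S] M₁.carrier) (f₂ : M₂.carrier ≃ₗ[S] M₂.carrier)
    {i : M₀.carrier →ₗ[S] M₁.carrier} {p : M₁.carrier →ₗ[S] M₂.carrier}
    (hi : Function.Injective i) (hp : Function.Surjective p) (hex : Function.Exact i p)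
    (h₀ : ∀ m, f₁ (i m) = i (f₀ m)) (h₂ : ∀ m, p (f₁ m) = f₂ (p m)) :
    toK1F ⟨M₁, f₁⟩ = toK1F ⟨M₀, f₀⟩ + toK1F ⟨M₂, f₂⟩ := by
  obtain ⟨Q₀, hQ₀⟩ := M₀.exists_free_prod
  obtain ⟨Q₂, hQ₂⟩ := M₂.exists_free_prod
  have hQ₁ : Module.Free S (M₁.carrier × (Q₀.carrier × Q₂.carrier)) :=
    Module.Free.prod_prod_of_exact hi hp hex
  rw [toK1F_eq_clsStab ⟨M₀, f₀⟩ _ hQ₀, toK1F_eq_clsStab ⟨M₁, f₁⟩ (Q₀.prod Q₂) hQ₁,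
    toK1F_eq_clsStab ⟨M₂, f₂⟩ _ hQ₂]
  exact K1F.cls_eq_add_of_exact _ _ _ (i := i.prodMap (LinearMap.inl S _ _))
    (p := p.prodMap (LinearMap.snd S _ _)) (hi.prodMap (LinearMap.inl_injective (R := S)))
    (hp.prodMap (LinearMap.snd_surjective (R := S)))
    (hex.prodMap (Function.Exact.inl_snd (R := S)))
    (fun m => Prod.ext (h₀ m.1) rfl) (fun m => Prod.ext (h₂ m.1) rfl)

end K1Gen

noncomputable def K1.toK1F (S : Type u) [Ring S] : K1 S →+ K1F S :=
  QuotientAddGroup.lift _ (FreeAbelianGroup.lift K1Gen.toK1F) <| (AddSubgroup.closure_le _).2 <| by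
    rintro _ (⟨M₀, M₁, M₂, f₀, f₁, f₂, i, p, hi, hp, hr, h₀, h₂, rfl⟩ | ⟨M, f, g, rfl⟩) <;>
      simp only [SetLike.mem_coe, AddMonoidHom.mem_ker, map_sub, FreeAbelianGroup.lift_apply_of,
        sub_sub, sub_eq_zero]
    · exact K1Gen.toK1F_eq_add_of_exact f₀ f₁ f₂ hi hp (LinearMap.exact_iff.2 hr.symm) h₀ h₂
    · exact K1Gen.toK1F_trans M f g

theorem K1.toK1F_cls (g : K1Gen S) : K1.toK1F S (K1.cls S g) = g.toK1F :=
  (QuotientAddGroup.lift_mk _ _ _).trans (FreeAbelianGroup.lift_apply_of _ _)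

def K1FGen.toK1Gen (g : K1FGen S) : K1Gen S := ⟨g.base.toFGProj, g.auto⟩

def K1F.toK1 (S : Type u) [Ring S] : K1F S →+ K1 S :=
  QuotientAddGroup.map _ _ (FreeAbelianGroup.map K1FGen.toK1Gen) <|
    (AddSubgroup.closure_le _).2 fun x hx => AddSubgroup.subset_closure <| by
      rcases hx with ⟨M₀, M₁, M₂, f₀, f₁, f₂, i, p, hi, hp, hr, h₀, h₂, rfl⟩ | ⟨M, f, g, rfl⟩
      · exact Or.inl ⟨M₀.toFGProj, M₁.toFGProj, M₂.toFGProj, f₀, f₁, f₂, i, p, hi, hp, hr, h₀, h₂,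
          by simp only [map_sub, FreeAbelianGroup.map_of_apply]; rfl⟩
      · exact Or.inr ⟨M.toFGProj, f, g, by simp only [map_sub, FreeAbelianGroup.map_of_apply]; rfl⟩

theorem K1F.toK1_cls (g : K1FGen S) : K1F.toK1 S (K1F.cls S g) = K1.cls S g.toK1Gen :=
  (QuotientAddGroup.map_mk _ _ _ _ _).trans (congrArg _ (FreeAbelianGroup.map_of_apply _))

theorem K1.toK1F_comp_toK1 : (K1.toK1F S).comp (K1F.toK1 S) = AddMonoidHom.id (K1F S) :=
  K1F.hom_ext fun ⟨M, f⟩ => by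
    rw [AddMonoidHom.comp_apply, K1F.toK1_cls, K1.toK1F_cls,
      K1Gen.toK1F_eq_clsStab _ M.toFGProj
        (inferInstanceAs (Module.Free S (M.carrier × M.carrier)))]
    exact K1F.cls_prodCongr_refl M M f

theorem K1F.toK1_comp_toK1F : (K1F.toK1 S).comp (K1.toK1F S) = AddMonoidHom.id (K1 S) :=
  K1.hom_ext fun ⟨P, f⟩ => by
    obtain ⟨Q, hQ⟩ := P.exists_free_prod
    rw [AddMonoidHom.comp_apply, K1.toK1F_cls, K1Gen.toK1F_eq_clsStab _ Q hQ]
    exact (K1F.toK1_cls _).trans (K1.cls_prodCongr_refl P Q f)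

noncomputable def K1F.equivK1 (S : Type u) [Ring S] : K1F S ≃+ K1 S :=
  (K1F.toK1 S).toAddEquiv (K1.toK1F S) K1.toK1F_comp_toK1 K1F.toK1_comp_toK1F

/-- The canonical map `α : K₁ᶠ(S) → K₁(S)`, `[f] ↦ [f]`, is an isomorphism. -/
theorem K1F_to_K1_isomorphism (S : Type u) [Ring S] :
    ∃ α : K1F S →+ K1 S,
      (∀ g : K1FGen S, α (K1F.cls S g) = K1.cls S ⟨g.base.toFGProj, g.auto⟩) ∧
      Function.Bijective α :=
  ⟨K1F.equivK1 S, K1F.toK1_cls, (K1F.equivK1 S).bijective⟩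
end

section
/- Every virtually cyclic group is either finite, or maps onto ℤ with finite kernel, or maps onto the infinite dihedral group with finite kernel; in particular a torsionfree virtually cyclic group is trivial or infinite cyclic. -/
/-!
STATEMENT 16: Every virtually cyclic group is either finite, or maps onto `ℤ` with finite
kernel, or maps onto the infinite dihedral group (`DihedralGroup 0`) with finite kernel;
in particular, a torsionfree virtually cyclic group is trivial or infinite cyclic.
-/

/-- A group is virtually cyclic if it has a cyclic subgroup of finite index. -/
def IsVirtuallyCyclic (G : Type*) [Group G] : Prop :=
  ∃ H : Subgroup G, IsCyclic H ∧ H.FiniteIndex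

/-!
Replace a cyclic subgroup of finite index by its normal core `⟨s⟩`; when `G` is infinite, `s` has
infinite order. Every element conjugates `s` to `s` or `s⁻¹`, so the centralizer `K` of `s` has
index at most two and contains `⟨s⟩` as a central subgroup. The transfer `K → ⟨s⟩ ≅ ℤ`,
`g ↦ g ^ [K : ⟨s⟩]`, divided by a generator of its image, is a surjection onto `ℤ`; its kernel
consists of torsion elements, so it meets `⟨s⟩` trivially and is finite. If `K = G` we are done.
Otherwise an element `a` inverting `s` negates this map on `K`, and sending `a` to a reflection
extends it to a surjection onto the infinite dihedral group with the same kernel. A torsionfree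
group has no nontrivial finite subgroup, and a reflection of `D∞` lifts to a nontrivial element
whose square lies in the finite kernel.
-/

section

open Subgroup DihedralGroup

variable {G : Type*} [Group G]

theorem Subgroup.finite_of_disjoint {H L : Subgroup G} [H.FiniteIndex] (h : Disjoint H L) :
    Finite L := by
  refine Nat.finite_of_card_ne_zero ?_
  rw [← relIndex_bot_left, ← h.eq_bot, inf_relIndex_right]
  exact (H.subgroupOf L).index_ne_zero_of_finite

theorem eq_zero_of_isOfFinOrder_zpow {s : G} (hs : ¬IsOfFinOrder s) {k : ℤ}
    (h : IsOfFinOrder (s ^ k)) : k = 0 := by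
  by_contra hk
  obtain ⟨n, hn, hpow⟩ := isOfFinOrder_iff_pow_eq_one.1 h
  refine hs (isOfFinOrder_iff_zpow_eq_one.2 ⟨k * n, mul_ne_zero hk (by omega), ?_⟩)
  rw [zpow_mul, zpow_natCast, hpow]

theorem finite_of_forall_isOfFinOrder {s : G} (hs : ¬IsOfFinOrder s) [(zpowers s).FiniteIndex]
    {L : Subgroup G} (hL : ∀ g ∈ L, IsOfFinOrder g) : Finite L := by
  refine finite_of_disjoint (H := zpowers s) (disjoint_def.2 fun {g} hgs hgL => ?_)
  obtain ⟨k, rfl⟩ := mem_zpowers_iff.1 hgs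
  rw [eq_zero_of_isOfFinOrder_zpow hs (hL _ hgL), zpow_zero]

theorem exists_pow_index_eq_zpow {s : G} (hs : s ∈ center G) (hs' : ¬IsOfFinOrder s)
    [(zpowers s).FiniteIndex] :
    ∃ Φ : G →* Multiplicative ℤ, ∀ g, g ^ (zpowers s).index = s ^ (Φ g).toAdd := by
  let e : Multiplicative ℤ ≃* zpowers s :=
    MonoidHom.ofInjective (f := zpowersHom G s) (injective_zpow_iff_not_isOfFinOrder.2 hs')
  refine ⟨MonoidHom.transfer e.symm.toMonoidHom, fun g => ?_⟩
  have central (k : ℕ) (x : G) (hk : x⁻¹ * g ^ k * x ∈ zpowers s) :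
      x⁻¹ * g ^ k * x = g ^ k := by
    have hc := mem_center_iff.1 (zpowers_le.2 hs hk) x
    calc x⁻¹ * g ^ k * x = x * (x⁻¹ * g ^ k * x) * x⁻¹ := by rw [hc, mul_inv_cancel_right]
      _ = g ^ k := by group
  rw [MonoidHom.transfer_eq_pow _ g central]
  exact (congrArg Subtype.val (e.apply_symm_apply ⟨g ^ (zpowers s).index, _⟩)).symm

theorem MonoidHom.exists_surjective_of_ne_one {Φ : G →* Multiplicative ℤ} (hΦ : Φ ≠ 1) :
    ∃ φ : G →* Multiplicative ℤ, Function.Surjective φ ∧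
      ∃ d : ℤ, d ≠ 0 ∧ ∀ g, (Φ g).toAdd = d * (φ g).toAdd := by
  obtain ⟨g₀, hg₀⟩ : ∃ g, Φ g ≠ 1 := by
    by_contra! h
    exact hΦ (MonoidHom.ext h)
  have : Infinite Φ.range := Set.infinite_coe_iff.2 <|
    (infinite_zpowers.2 (not_isOfFinOrder_of_isMulTorsionFree hg₀)).mono
      (zpowers_le.2 ⟨g₀, rfl⟩)
  let e : Multiplicative ℤ ≃* Φ.range := intCyclicMulEquiv
  let φ := e.symm.toMonoidHom.comp Φ.rangeRestrict
  set d := (e (.ofAdd 1) : Multiplicative ℤ).toAdd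
  have hd : ∀ g, (Φ g).toAdd = d * (φ g).toAdd := by
    intro g
    calc (Φ g).toAdd = (e (.ofAdd 1 ^ (φ g).toAdd) : Multiplicative ℤ).toAdd := by
          rw [← ofAdd_zsmul, smul_eq_mul, mul_one, ofAdd_toAdd]
          simp [φ]
      _ = d * (φ g).toAdd := by
          rw [map_zpow, Subgroup.coe_zpow, toAdd_zpow, smul_eq_mul, mul_comm]
  refine ⟨φ, e.symm.surjective.comp Φ.rangeRestrict_surjective, d, fun hd0 => hg₀ ?_, hd⟩
  simpa [hd0] using hd g₀

theorem exists_surjective_pow_eq_zpow_of_mem_center {s : G} (hs : s ∈ center G)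
    (hs' : ¬IsOfFinOrder s) [(zpowers s).FiniteIndex] :
    ∃ φ : G →* Multiplicative ℤ, Function.Surjective φ ∧
      ∃ (E : ℕ) (d : ℤ), E ≠ 0 ∧ d ≠ 0 ∧ ∀ g, g ^ E = s ^ (d * (φ g).toAdd) := by
  obtain ⟨Φ, hΦ⟩ := exists_pow_index_eq_zpow hs hs'
  have hΦs : (Φ s).toAdd = (zpowers s).index := by
    apply injective_zpow_iff_not_isOfFinOrder.2 hs'
    simp only [← hΦ, zpow_natCast]
  have hΦ1 : Φ ≠ 1 := fun h => FiniteIndex.index_ne_zero (H := zpowers s) <| by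
    simpa [h] using hΦs.symm
  obtain ⟨φ, hφ, d, hd, hΦφ⟩ := Φ.exists_surjective_of_ne_one hΦ1
  exact ⟨φ, hφ, _, d, FiniteIndex.index_ne_zero, hd, fun g => by rw [hΦ, hΦφ]⟩

theorem finite_ker_of_pow_eq_zpow {s : G} (hs : ¬IsOfFinOrder s) [(zpowers s).FiniteIndex]
    {φ : G →* Multiplicative ℤ} {E : ℕ} {d : ℤ} (hE : E ≠ 0)
    (h : ∀ g, g ^ E = s ^ (d * (φ g).toAdd)) : Finite φ.ker :=
  finite_of_forall_isOfFinOrder hs fun g hg => isOfFinOrder_iff_pow_eq_one.2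
    ⟨E, Nat.pos_of_ne_zero hE, by rw [h, (MonoidHom.mem_ker).1 hg]; simp⟩

theorem exists_surjective_int_finite_ker_of_mem_center {s : G} (hs : s ∈ center G)
    (hs' : ¬IsOfFinOrder s) [(zpowers s).FiniteIndex] :
    ∃ φ : G →* Multiplicative ℤ, Function.Surjective φ ∧ Finite φ.ker := by
  obtain ⟨φ, hφ, E, d, hE, -, hpow⟩ := exists_surjective_pow_eq_zpow_of_mem_center hs hs'
  exact ⟨φ, hφ, finite_ker_of_pow_eq_zpow hs' hE hpow⟩

theorem conj_eq_or_eq_inv {s : G} (hs : ¬IsOfFinOrder s) [hN : (zpowers s).Normal] (g : G) :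
    g * s * g⁻¹ = s ∨ g * s * g⁻¹ = s⁻¹ := by
  obtain ⟨m, hm⟩ := mem_zpowers_iff.1 (hN.conj_mem s (mem_zpowers s) g)
  obtain ⟨n, hn⟩ := mem_zpowers_iff.1 (hN.conj_mem s (mem_zpowers s) g⁻¹)
  have hnm : n * m = 1 := by
    apply injective_zpow_iff_not_isOfFinOrder.2 hs
    show s ^ (n * m) = s ^ (1 : ℤ)
    rw [zpow_mul, hn, conj_zpow, hm, zpow_one]
    group
  rcases Int.eq_one_or_neg_one_of_mul_eq_one' hnm with ⟨-, rfl⟩ | ⟨-, rfl⟩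
  · exact .inl (by rw [← hm, zpow_one])
  · exact .inr (by rw [← hm, zpow_neg_one])

theorem self_ne_inv_of_not_isOfFinOrder {s : G} (hs : ¬IsOfFinOrder s) : s ≠ s⁻¹ := fun h =>
  hs (isOfFinOrder_iff_pow_eq_one.2 ⟨2, two_pos, by rw [sq]; nth_rw 1 [h]; simp⟩)

theorem index_centralizer_eq_two {s a : G} (hs : ¬IsOfFinOrder s) [(zpowers s).Normal]
    (ha : a * s * a⁻¹ = s⁻¹) : (centralizer {s}).index = 2 := by
  have hmem (g : G) : g ∈ centralizer {s} ↔ g * s * g⁻¹ = s := by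
    rw [mem_centralizer_singleton_iff, mul_inv_eq_iff_eq_mul]
  refine index_eq_two_iff.2 ⟨a, fun b => ?_⟩
  have hba : b * a * s * (b * a)⁻¹ = (b * s * b⁻¹)⁻¹ := by
    rw [show b * a * s * (b * a)⁻¹ = b * (a * s * a⁻¹) * b⁻¹ by group, ha]
    group
  rw [hmem, hmem, hba]
  have hss := self_ne_inv_of_not_isOfFinOrder hs
  rcases conj_eq_or_eq_inv hs b with h | h <;> rw [h] <;> simp [hss.symm]

theorem Subgroup.finiteIndex_zpowers_mk {K : Subgroup G} {s : G} (hs : s ∈ K)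
    [(zpowers s).FiniteIndex] : (zpowers (⟨s, hs⟩ : K)).FiniteIndex := by
  have h : (zpowers s).index = (zpowers (⟨s, hs⟩ : K)).index * K.index := by
    rw [← index_map_subtype, MonoidHom.map_zpowers]
    rfl
  exact ⟨left_ne_zero_of_mul (h ▸ FiniteIndex.index_ne_zero)⟩

-- `ZMod 0` is `ℤ`; the explicit casts keep `rw` from having to see through that.
theorem exists_dihedral_hom_of_index_eq_two {K : Subgroup G} (hK : K.index = 2) {a : G}
    (ha : a ∉ K) {F : G → ℤ} (hF : ∀ {x y}, x ∈ K → y ∈ K → F (x * y) = F x + F y)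
    (hFconj : ∀ {x}, x ∈ K → F (a⁻¹ * x * a) = - F x) :
    ∃ ψ : G →* DihedralGroup 0, ∀ x ∈ K, ψ x = r (Int.cast (F x)) ∧
      ψ (a * x) = sr (Int.cast (F x)) := by
  classical
  have hmem {x y : G} : x * y ∈ K ↔ (x ∈ K ↔ y ∈ K) := mul_mem_iff_of_index_two hK
  have ha' : a⁻¹ ∉ K := by rwa [inv_mem_iff]
  have hconjK {x : G} (hx : x ∈ K) : a⁻¹ * x * a ∈ K := by simp [hmem, hx, ha, ha']
  have hleft {x : G} (hx : x ∉ K) : a⁻¹ * x ∈ K := by simp [hmem, hx, ha']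
  have hsq : a * a ∈ K := by simp [hmem, ha]
  have hFsq : F (a * a) = 0 := by
    have := hFconj hsq
    simp only [inv_mul_cancel_left] at this
    omega
  let ψ : G → DihedralGroup 0 := fun g =>
    if g ∈ K then r (Int.cast (F g)) else sr (Int.cast (F (a⁻¹ * g)))
  have hψ : ∀ x y, ψ (x * y) = ψ x * ψ y := by
    intro x y
    by_cases hx : x ∈ K <;> by_cases hy : y ∈ K <;> dsimp only [ψ]
    · rw [if_pos (mul_mem hx hy), if_pos hx, if_pos hy, r_mul_r, hF hx hy, Int.cast_add]
    · have hxy : x * y ∉ K := by simp [hmem, hx, hy]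
      rw [if_neg hxy, if_pos hx, if_neg hy, r_mul_sr,
        show a⁻¹ * (x * y) = a⁻¹ * x * a * (a⁻¹ * y) by group, hF (hconjK hx) (hleft hy),
        hFconj hx]
      push_cast; ring_nf
    · have hxy : x * y ∉ K := by simp [hmem, hx, hy]
      rw [if_neg hxy, if_neg hx, if_pos hy, sr_mul_r, ← mul_assoc, hF (hleft hx) hy, Int.cast_add]
    · have hxy : x * y ∈ K := by simp [hmem, hx, hy]
      rw [if_pos hxy, if_neg hx, if_neg hy, sr_mul_sr,
        show x * y = a * a * (a⁻¹ * (a⁻¹ * x) * a) * (a⁻¹ * y) by group,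
        hF (mul_mem hsq (hconjK (hleft hx))) (hleft hy), hF hsq (hconjK (hleft hx)),
        hFconj (hleft hx), hFsq]
      push_cast; ring_nf
  refine ⟨MonoidHom.mk' ψ hψ, fun x hx => ⟨if_pos hx, ?_⟩⟩
  have hax : a * x ∉ K := by simp [hmem, ha, hx]
  simp only [MonoidHom.mk'_apply, ψ, if_neg hax, inv_mul_cancel_left]

theorem exists_surjective_dihedral_of_index_eq_two {K : Subgroup G} (hK : K.index = 2) {a : G}
    (ha : a ∉ K) {φ : K →* Multiplicative ℤ} (hφ : Function.Surjective φ)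
    (hconj : ∀ x y : K, (y : G) = a⁻¹ * x * a → φ y = (φ x)⁻¹) :
    ∃ ψ : G →* DihedralGroup 0, Function.Surjective ψ ∧ ψ.ker = φ.ker.map K.subtype := by
  classical
  let F : G → ℤ := fun g => if h : g ∈ K then (φ ⟨g, h⟩).toAdd else 0
  have hFK (x : K) : F x = (φ x).toAdd := dif_pos x.2
  have hconjK {x : G} (hx : x ∈ K) : a⁻¹ * x * a ∈ K := by
    simpa using (normal_of_index_eq_two hK).conj_mem x hx a⁻¹
  obtain ⟨ψ, hψ⟩ := exists_dihedral_hom_of_index_eq_two hK ha (F := F)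
    (fun hx hy => by
      rw [hFK ⟨_, mul_mem hx hy⟩, hFK ⟨_, hx⟩, hFK ⟨_, hy⟩, ← toAdd_mul, ← map_mul]
      rfl)
    (fun hx => by
      rw [hFK ⟨_, hconjK hx⟩, hFK ⟨_, hx⟩, hconj ⟨_, hx⟩ ⟨_, hconjK hx⟩ rfl,
        toAdd_inv])
  refine ⟨ψ, ?_, ?_⟩
  · rintro (k | k) <;> obtain ⟨x, hx⟩ := hφ (.ofAdd k)
    · exact ⟨x, by rw [(hψ x x.2).1, hFK, hx]; rfl⟩
    · exact ⟨a * x, by rw [(hψ x x.2).2, hFK, hx]; rfl⟩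
  · ext g
    simp only [MonoidHom.mem_ker, mem_map, coe_subtype]
    constructor
    · intro hg
      by_cases hgK : g ∈ K
      · refine ⟨⟨g, hgK⟩, ?_, rfl⟩
        rw [(hψ g hgK).1, hFK ⟨g, hgK⟩, one_def, r.injEq] at hg
        simpa using hg
      · have := (hψ (a⁻¹ * g) ((mul_mem_iff_of_index_two hK).2 (by simp [hgK, ha]))).2
        rw [mul_inv_cancel_left, hg, one_def] at this
        cases this
    · rintro ⟨x, hx, rfl⟩
      rw [(hψ x x.2).1, hFK, hx]
      rfl

theorem exists_surjective_dihedral_finite_ker_of_conj_eq_inv {s a : G} (hs : ¬IsOfFinOrder s)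
    [(zpowers s).Normal] [(zpowers s).FiniteIndex] (ha : a * s * a⁻¹ = s⁻¹) :
    ∃ ψ : G →* DihedralGroup 0, Function.Surjective ψ ∧ Finite ψ.ker := by
  set K := centralizer {s}
  have hK : K.index = 2 := index_centralizer_eq_two hs ha
  have haK : a ∉ K := fun h => self_ne_inv_of_not_isOfFinOrder hs <| by
    rwa [mem_centralizer_singleton_iff.1 h, mul_inv_cancel_right] at ha
  have hsK : s ∈ K := mem_centralizer_singleton_iff.2 rfl
  let s' : K := ⟨s, hsK⟩
  have := finiteIndex_zpowers_mk hsK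
  have hs'c : s' ∈ center K :=
    mem_center_iff.2 fun x => Subtype.ext (mem_centralizer_singleton_iff.1 x.2)
  have hs'o : ¬IsOfFinOrder s' := fun h => hs (K.subtype.isOfFinOrder h)
  obtain ⟨φ, hφ, E, d, hE, hd, hpow⟩ := exists_surjective_pow_eq_zpow_of_mem_center hs'c hs'o
  have hpowG (y : K) : (y : G) ^ E = s ^ (d * (φ y).toAdd) := by
    simpa using congrArg Subtype.val (hpow y)
  have ha' : a⁻¹ * s * a = s⁻¹ := by
    have : a⁻¹ * (a * s * a⁻¹)⁻¹ * a = s⁻¹ := by group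
    rwa [ha, inv_inv] at this
  have hconj (x y : K) (hy : (y : G) = a⁻¹ * x * a) : φ y = (φ x)⁻¹ := by
    have h : s ^ (d * (φ y).toAdd) = s ^ (d * -(φ x).toAdd) := calc
      s ^ (d * (φ y).toAdd) = (a⁻¹ * x * a⁻¹⁻¹) ^ E := by rw [← hpowG, hy, inv_inv]
      _ = (a⁻¹ * s * a⁻¹⁻¹) ^ (d * (φ x).toAdd) := by rw [conj_pow, hpowG, conj_zpow]
      _ = s ^ (d * -(φ x).toAdd) := by rw [inv_inv, ha', inv_zpow, ← zpow_neg, mul_neg]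
    apply Multiplicative.toAdd.injective
    rw [toAdd_inv]
    exact mul_left_cancel₀ hd (injective_zpow_iff_not_isOfFinOrder.2 hs h)
  obtain ⟨ψ, hψ, hker⟩ := exists_surjective_dihedral_of_index_eq_two hK haK hφ hconj
  have : Finite φ.ker := finite_ker_of_pow_eq_zpow hs'o hE hpow
  exact ⟨ψ, hψ,
    hker ▸ .of_equiv _ (φ.ker.equivMapOfInjective _ K.subtype_injective).toEquiv⟩

theorem IsVirtuallyCyclic.exists_normal_zpowers [Infinite G] (hG : IsVirtuallyCyclic G) :
    ∃ s : G, ¬IsOfFinOrder s ∧ (zpowers s).Normal ∧ (zpowers s).FiniteIndex := by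
  obtain ⟨H, hH, hHfi⟩ := hG
  have : IsCyclic H.normalCore := isCyclic_of_le (normalCore_le H)
  obtain ⟨s, hs⟩ := (Subgroup.isCyclic_iff_exists_zpowers_eq_top _).1 this
  refine ⟨s, fun hfin => ?_, hs ▸ inferInstance, hs ▸ inferInstance⟩
  have : Finite (zpowers s) := hfin.finite_zpowers
  have : (zpowers s).FiniteIndex := hs ▸ inferInstance
  have : Finite G := (finite_iff_finite_and_finiteIndex (zpowers s)).2 ⟨‹_›, ‹_›⟩
  exact not_finite G

theorem IsVirtuallyCyclic.exists_surjective_int_or_dihedral [Infinite G]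
    (hG : IsVirtuallyCyclic G) :
    (∃ φ : G →* Multiplicative ℤ, Function.Surjective φ ∧ Finite φ.ker) ∨
      (∃ ψ : G →* DihedralGroup 0, Function.Surjective ψ ∧ Finite ψ.ker) := by
  obtain ⟨s, hs, hN, hfi⟩ := hG.exists_normal_zpowers
  by_cases hc : s ∈ center G
  · exact .inl (exists_surjective_int_finite_ker_of_mem_center hc hs)
  · obtain ⟨a, ha⟩ : ∃ a : G, a * s * a⁻¹ ≠ s := by
      simpa [mem_center_iff, mul_inv_eq_iff_eq_mul] using hc
    exact .inr (exists_surjective_dihedral_finite_ker_of_conj_eq_inv hs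
      ((conj_eq_or_eq_inv hs a).resolve_left ha))

theorem Subgroup.eq_bot_of_finite (htf : ∀ g : G, g ≠ 1 → ¬IsOfFinOrder g) (L : Subgroup G)
    [Finite L] : L = ⊥ :=
  (eq_bot_iff_forall L).2 fun g hg => by_contra fun h =>
    htf g h (L.subtype.isOfFinOrder (isOfFinOrder_of_finite (⟨g, hg⟩ : L)))

theorem exists_isOfFinOrder_ne_one_of_surjective_dihedral {ψ : G →* DihedralGroup 0}
    (hψ : Function.Surjective ψ) [Finite ψ.ker] : ∃ g : G, g ≠ 1 ∧ IsOfFinOrder g := by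
  obtain ⟨g, hg⟩ := hψ (sr 0)
  refine ⟨g, fun h => (by rw [h, map_one, one_def] at hg; cases hg), ?_⟩
  have hsq : g ^ 2 ∈ ψ.ker := by rw [MonoidHom.mem_ker, map_pow, hg, sq, sr_mul_self]
  exact (ψ.ker.subtype.isOfFinOrder (isOfFinOrder_of_finite ⟨_, hsq⟩)).of_pow two_ne_zero

end

theorem virtuallyCyclic_trichotomy (G : Type*) [Group G] (hG : IsVirtuallyCyclic G) :
    (Finite G ∨
      (∃ φ : G →* Multiplicative ℤ, Function.Surjective φ ∧ Finite φ.ker) ∨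
      (∃ ψ : G →* DihedralGroup 0, Function.Surjective ψ ∧ Finite ψ.ker)) ∧
    ((∀ g : G, g ≠ 1 → ¬IsOfFinOrder g) →
      Subsingleton G ∨ Nonempty (G ≃* Multiplicative ℤ)) := by
  rcases finite_or_infinite G with hfin | hinf
  · refine ⟨.inl hfin, fun htf => .inl ?_⟩
    exact subsingleton_of_forall_eq 1 fun g =>
      by_contra fun h => htf g h (isOfFinOrder_of_finite g)
  refine ⟨.inr hG.exists_surjective_int_or_dihedral, fun htf => ?_⟩
  rcases hG.exists_surjective_int_or_dihedral with ⟨φ, hφ, hker⟩ | ⟨ψ, hψ, hker⟩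
  · have hinj : Function.Injective φ :=
      (MonoidHom.ker_eq_bot_iff φ).1 (φ.ker.eq_bot_of_finite htf)
    exact .inr ⟨MulEquiv.ofBijective φ ⟨hinj, hφ⟩⟩
  · obtain ⟨g, hg, hfin⟩ := exists_isOfFinOrder_ne_one_of_surjective_dihedral hψ
    exact absurd hfin (htf g hg)
end
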